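/- Let F be a class of next-token predictors with VC(F) = d, f* ∈ F, and r_{f*} any reward with 1 − r_{f*}(x, y) ≤ 1{f*^AR(x) ≠ y}. Then with probability at least 1−δ over n i.i.d. samples (x_i, f*^AR(x_i)), the SFT estimator satisfies E_{P_x} r_{f*}(x, f̂_ntp^AR(x)) ≥ 1 − c·(d·log(T)·log(n) + log(1/δ))/n for a universal constant c. -/

import Mathlib

/-!
Realizability makes the empirical next-token loss of `fstar` zero, so the ERM is consistent: its
autoregressive answers agree with those of `fstar` on every training prompt. It therefore suffices
to bound the probability that some `f ∈ F` whose mistake set `{x | f^AR(x) ≠ fstar^AR(x)}` has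
mass above `ε` makes no mistake on the sample. This is the realizable PAC argument: Chebyshev's
inequality passes to a ghost sample, and random swaps between the two halves reduce the question
to a fixed double sample, on which each behaviour of the mistake class survives with probability
at most `2^(-k)`, `k ≈ n ε / 4`. The mistake of `f` on a prompt is determined by the predictions of
`f` on the `T` prefixes of the target answer, so by Sauer–Shelah the mistake class has at most
`(2nT + 1)^d` behaviours on `2n` prompts; this is where `d log T log n` comes from.
-/

/-- Autoregressive unrolling of a next-token predictor. -/
def arList (f : List Bool → Bool) (x : List Bool) : ℕ → List Bool
  | 0 => []
  | T + 1 => arList f x T ++ [f (x ++ arList f x T)]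

/-- `H` shatters the points `xs`. -/
def Shatters {α : Type*} (H : Set (α → Bool)) {n : ℕ} (xs : Fin n → α) : Prop :=
  ∀ v : Fin n → Bool, ∃ h ∈ H, ∀ i, h (xs i) = v i

/-- The VC dimension of `H` is at most `d`. -/
def VCdimLe {α : Type*} (H : Set (α → Bool)) (d : ℕ) : Prop :=
  ∀ n (xs : Fin n → α), Shatters H xs → n ≤ d

open Finset

lemma arList_length (f : List Bool → Bool) (x : List Bool) (T : ℕ) :
    (arList f x T).length = T := by
  induction T with
  | zero => rfl
  | succ T ih => simp [arList, ih]

lemma arList_take (f : List Bool → Bool) (x : List Bool) {t T : ℕ} (h : t ≤ T) :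
    (arList f x T).take t = arList f x t := by
  induction T, h using Nat.le_induction with
  | base => simp [arList_length]
  | succ T h ih => rw [arList, List.take_append_of_le_length (by rwa [arList_length]), ih]

lemma arList_getD (f : List Bool → Bool) (x : List Bool) {t T : ℕ} (h : t < T) :
    (arList f x T).getD t false = f (x ++ arList f x t) := by
  induction T, h using Nat.le_induction with
  | base =>
    rw [arList, List.getD_append_right _ _ _ _ (arList_length f x t).le, arList_length]
    simp
  | succ T h ih => rw [arList, List.getD_append _ _ _ _ (by rwa [arList_length]), ih]

lemma arList_succ_eq_iff (f g : List Bool → Bool) (x : List Bool) (T : ℕ) :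
    arList f x (T + 1) = arList g x (T + 1) ↔
      arList f x T = arList g x T ∧ f (x ++ arList f x T) = g (x ++ arList g x T) := by
  simp [arList]

lemma arList_eq_iff (f g : List Bool → Bool) (x : List Bool) (T : ℕ) :
    arList f x T = arList g x T ↔ ∀ t < T, f (x ++ arList g x t) = g (x ++ arList g x t) := by
  induction T with
  | zero => simp [arList]
  | succ T ih =>
    rw [arList_succ_eq_iff, Nat.forall_lt_succ_right, ← ih]
    exact and_congr_right fun h => by rw [h]

lemma ite_one_zero_mono {R : Type*} [Semiring R] [PartialOrder R] [ZeroLEOneClass R] {P Q : Prop}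
    [Decidable P] [Decidable Q] (h : P → Q) : (if P then (1 : R) else 0) ≤ if Q then 1 else 0 := by
  split_ifs <;> simp_all

lemma sum_mul_ite_not {Ω : Type*} [Fintype Ω] (w : Ω → ℝ) (P : Ω → Prop) [DecidablePred P] :
    ∑ ω, w ω * (if ¬ P ω then 1 else 0) = ∑ ω, w ω - ∑ ω, w ω * (if P ω then 1 else 0) := by
  rw [eq_sub_iff_add_eq, ← sum_add_distrib]
  exact sum_congr rfl fun ω _ => by split_ifs <;> ring

lemma sum_mul_ite_le_sum_mul_sq_div {Ω : Type*} [Fintype Ω] {w : Ω → ℝ} (hw : ∀ ω, 0 ≤ w ω)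
    (Y : Ω → ℝ) {a : ℝ} (ha : 0 < a) :
    ∑ ω, w ω * (if a ≤ |Y ω| then 1 else 0) ≤ (∑ ω, w ω * Y ω ^ 2) / a ^ 2 := by
  rw [le_div_iff₀ (by positivity), sum_mul]
  refine sum_le_sum fun ω _ => ?_
  rw [mul_assoc]
  refine mul_le_mul_of_nonneg_left ?_ (hw ω)
  split_ifs with h
  · nlinarith [sq_abs (Y ω), abs_nonneg (Y ω)]
  · simp [sq_nonneg]

section Sampling

variable {X : Type*} {n : ℕ}

def sampleWeight (p : X → ℝ) (s : Fin n → X) : ℝ := ∏ i, p (s i)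

lemma sampleWeight_nonneg {p : X → ℝ} (hp : ∀ x, 0 ≤ p x) (s : Fin n → X) : 0 ≤ sampleWeight p s :=
  prod_nonneg fun i _ => hp (s i)

lemma sum_sampleWeight_mul_prod [Fintype X] {p : X → ℝ} (hp : ∑ x, p x = 1) (J : Finset (Fin n))
    (φ : Fin n → X → ℝ) :
    ∑ s : Fin n → X, sampleWeight p s * ∏ i ∈ J, φ i (s i) = ∏ i ∈ J, ∑ x, p x * φ i x := by
  classical
  have hs : ∀ s : Fin n → X, sampleWeight p s * ∏ i ∈ J, φ i (s i) =
      ∏ i, p (s i) * if i ∈ J then φ i (s i) else 1 := fun s => by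
    rw [prod_mul_distrib, prod_ite_mem, univ_inter, sampleWeight]
  rw [Fintype.sum_congr _ _ hs, ← Fintype.prod_sum (fun i x => p x * if i ∈ J then φ i x else 1)]
  simp_rw [mul_ite, mul_one, Finset.sum_ite_irrel, hp, prod_ite_mem, univ_inter]

lemma sum_sampleWeight [Fintype X] {p : X → ℝ} (hp : ∑ x, p x = 1) :
    ∑ s : Fin n → X, sampleWeight p s = 1 := by
  simpa using sum_sampleWeight_mul_prod (n := n) hp ∅ fun _ _ => 1

lemma sum_sampleWeight_mul_apply [Fintype X] {p : X → ℝ} (hp : ∑ x, p x = 1) (i : Fin n)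
    (φ : X → ℝ) :
    ∑ s : Fin n → X, sampleWeight p s * φ (s i) = ∑ x, p x * φ x := by
  simpa using sum_sampleWeight_mul_prod hp {i} fun _ => φ

lemma sum_sampleWeight_mul_apply_mul_apply [Fintype X] {p : X → ℝ} (hp : ∑ x, p x = 1) {i j : Fin n}
    (hij : i ≠ j) (φ ψ : X → ℝ) :
    ∑ s : Fin n → X, sampleWeight p s * (φ (s i) * ψ (s j)) =
      (∑ x, p x * φ x) * ∑ x, p x * ψ x := by
  classical
  simpa [prod_pair hij, hij.symm] using
    sum_sampleWeight_mul_prod hp {i, j} fun l => if l = i then φ else ψ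

def hitCount (g : X → Bool) (s : Fin n → X) : ℝ := ∑ i, if g (s i) then 1 else 0

def mass [Fintype X] (p : X → ℝ) (g : X → Bool) : ℝ := ∑ x, p x * if g x then 1 else 0

lemma sum_sampleWeight_mul_sum_sq [Fintype X] {p : X → ℝ} (hp : ∑ x, p x = 1) {ψ : X → ℝ}
    (hψ : ∑ x, p x * ψ x = 0) :
    ∑ s : Fin n → X, sampleWeight p s * (∑ i, ψ (s i)) ^ 2 = n * ∑ x, p x * ψ x ^ 2 := by
  have hij : ∀ i j : Fin n, ∑ s : Fin n → X, sampleWeight p s * (ψ (s i) * ψ (s j)) =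
      if i = j then ∑ x, p x * ψ x ^ 2 else 0 := fun i j => by
    split_ifs with h
    · subst h
      simp_rw [← sq]
      exact sum_sampleWeight_mul_apply hp i fun x => ψ x ^ 2
    · rw [sum_sampleWeight_mul_apply_mul_apply hp h, hψ, zero_mul]
  calc ∑ s : Fin n → X, sampleWeight p s * (∑ i, ψ (s i)) ^ 2
      = ∑ i, ∑ j, ∑ s : Fin n → X, sampleWeight p s * (ψ (s i) * ψ (s j)) := by
        simp_rw [sq, sum_mul_sum, mul_sum]
        rw [sum_comm]
        exact sum_congr rfl fun i _ => sum_comm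
    _ = n * ∑ x, p x * ψ x ^ 2 := by simp [hij]

lemma sum_mul_sq_ite_sub_mass [Fintype X] {p : X → ℝ} (hp : ∑ x, p x = 1) (g : X → Bool) :
    ∑ x, p x * ((if g x then 1 else 0) - mass p g) ^ 2 = mass p g * (1 - mass p g) := by
  have hx : ∀ x, p x * ((if g x then 1 else 0) - mass p g) ^ 2 =
      (1 - 2 * mass p g) * (p x * if g x then 1 else 0) + mass p g ^ 2 * p x := fun x => by
    split_ifs <;> ring
  rw [sum_congr rfl fun x _ => hx x, sum_add_distrib, ← mul_sum, ← mul_sum, hp, ← mass]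
  ring

lemma one_half_le_sum_sampleWeight_mul_ite_le_hitCount [Fintype X] {p : X → ℝ}
    (hp0 : ∀ x, 0 ≤ p x) (hp1 : ∑ x, p x = 1) (g : X → Bool) (h8 : 8 ≤ n * mass p g) :
    1 / 2 ≤ ∑ s : Fin n → X,
      sampleWeight p s * (if n * mass p g / 2 ≤ hitCount g s then 1 else 0) := by
  have hvar := sum_mul_sq_ite_sub_mass hp1 g
  set μ := mass p g
  have hnμ : 0 < n * μ / 2 := by linarith
  have hdev : ∀ s : Fin n → X, hitCount g s - n * μ = ∑ i, ((if g (s i) then 1 else 0) - μ) :=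
    fun s => by simp [hitCount, sum_sub_distrib]
  have hψ : ∑ x, p x * ((if g x then 1 else 0) - μ) = 0 := by
    simp [mul_sub, sum_sub_distrib, ← sum_mul, hp1, μ, mass]
  have hfar : ∑ s : Fin n → X, sampleWeight p s * (if ¬ n * μ / 2 ≤ hitCount g s then 1 else 0)
      ≤ 1 / 2 := calc
    _ ≤ ∑ s : Fin n → X, sampleWeight p s * (if n * μ / 2 ≤ |hitCount g s - n * μ| then 1 else 0) :=
        sum_le_sum fun s _ => mul_le_mul_of_nonneg_left (ite_one_zero_mono fun h => by
          rw [abs_sub_comm, abs_of_pos (by linarith)]; linarith) (sampleWeight_nonneg hp0 s)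
    _ ≤ (∑ s : Fin n → X, sampleWeight p s * (hitCount g s - n * μ) ^ 2) / (n * μ / 2) ^ 2 :=
        sum_mul_ite_le_sum_mul_sq_div (sampleWeight_nonneg hp0) _ hnμ
    _ = n * (μ * (1 - μ)) / (n * μ / 2) ^ 2 := by
        simp_rw [hdev, sum_sampleWeight_mul_sum_sq hp1 hψ, hvar]
    _ ≤ 1 / 2 := by
        have hn : (0 : ℝ) ≤ n := n.cast_nonneg
        rw [div_le_iff₀ (by positivity)]
        nlinarith [mul_nonneg hn (sq_nonneg μ)]
  rw [sum_mul_ite_not, sum_sampleWeight hp1] at hfar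
  linarith

end Sampling

section Symmetrization

variable {X : Type*} {n : ℕ}

def swapAt (σ : Fin n → Bool) (z : (Fin n → X) × (Fin n → X)) : (Fin n → X) × (Fin n → X) :=
  (fun i => if σ i then z.2 i else z.1 i, fun i => if σ i then z.1 i else z.2 i)

lemma swapAt_involutive (σ : Fin n → Bool) : Function.Involutive (swapAt (X := X) σ) := by
  intro z
  ext i <;> by_cases h : σ i <;> simp [swapAt, h]

lemma sampleWeight_swapAt (p : X → ℝ) (σ : Fin n → Bool) (z : (Fin n → X) × (Fin n → X)) :
    sampleWeight p (swapAt σ z).1 * sampleWeight p (swapAt σ z).2 =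
      sampleWeight p z.1 * sampleWeight p z.2 := by
  simp only [sampleWeight, swapAt, ← prod_mul_distrib]
  exact prod_congr rfl fun i _ => by by_cases h : σ i <;> simp [h, mul_comm]

lemma sum_sampleWeight_mul_sampleWeight [Fintype X] {p : X → ℝ} (hp : ∑ x, p x = 1) :
    ∑ z : (Fin n → X) × (Fin n → X), sampleWeight p z.1 * sampleWeight p z.2 = 1 := by
  rw [Fintype.sum_prod_type, ← sum_mul_sum, sum_sampleWeight hp, one_mul]

lemma sum_coin : ∑ _b : Bool, (1 / 2 : ℝ) = 1 := by norm_num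

lemma sum_sampleWeight_mul_sampleWeight_mul_eq_sum_coins [Fintype X] (p : X → ℝ)
    (H : (Fin n → X) × (Fin n → X) → ℝ) :
    ∑ z, sampleWeight p z.1 * sampleWeight p z.2 * H z =
      ∑ z, sampleWeight p z.1 * sampleWeight p z.2 *
        ∑ σ : Fin n → Bool, sampleWeight (fun _ => (1 / 2 : ℝ)) σ * H (swapAt σ z) := by
  have hinv : ∀ σ : Fin n → Bool,
      ∑ z, sampleWeight p z.1 * sampleWeight p z.2 * H (swapAt σ z) =
        ∑ z, sampleWeight p z.1 * sampleWeight p z.2 * H z := fun σ =>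
    Fintype.sum_bijective _ (swapAt_involutive σ).bijective _ _ fun z => by
      rw [sampleWeight_swapAt]
  calc ∑ z, sampleWeight p z.1 * sampleWeight p z.2 * H z
      = ∑ σ : Fin n → Bool, sampleWeight (fun _ => (1 / 2 : ℝ)) σ *
          ∑ z, sampleWeight p z.1 * sampleWeight p z.2 * H z := by
        rw [← sum_mul, sum_sampleWeight sum_coin, one_mul]
    _ = ∑ σ : Fin n → Bool, sampleWeight (fun _ => (1 / 2 : ℝ)) σ *
          ∑ z, sampleWeight p z.1 * sampleWeight p z.2 * H (swapAt σ z) := by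
        simp_rw [hinv]
    _ = _ := by
        simp_rw [mul_sum]
        rw [sum_comm]
        exact sum_congr rfl fun z _ => sum_congr rfl fun σ _ => by ring

lemma sum_coins_mul_prod_ite_eq (S : Finset (Fin n)) (τ : Fin n → Bool) :
    ∑ σ : Fin n → Bool, sampleWeight (fun _ => (1 / 2 : ℝ)) σ *
      ∏ i ∈ S, (if σ i = τ i then 1 else 0) = (1 / 2) ^ #S := by
  refine (sum_sampleWeight_mul_prod sum_coin S fun i b => if b = τ i then 1 else 0).trans ?_
  simp

/-- A function that vanishes on the first half of `swapAt σ z` and has `k` hits on the second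
must take different values at `z.1 i` and `z.2 i` at `k` or more indices `i`, and `σ` is
forced at each of them. -/
lemma sum_coins_mul_ite_swapAt_le (r : X → Bool) (z : (Fin n → X) × (Fin n → X)) (k : ℕ) :
    ∑ σ : Fin n → Bool, sampleWeight (fun _ => (1 / 2 : ℝ)) σ *
      (if (∀ i, r ((swapAt σ z).1 i) = false) ∧ (k : ℝ) ≤ hitCount r (swapAt σ z).2
        then 1 else 0) ≤ (1 / 2) ^ k := by
  classical
  set S := univ.filter fun i => r (z.1 i) ≠ r (z.2 i)
  have hforced : ∀ σ : Fin n → Bool, (∀ i, r ((swapAt σ z).1 i) = false) →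
      (∀ i ∈ S, σ i = r (z.1 i)) ∧ hitCount r (swapAt σ z).2 ≤ #S := by
    intro σ h
    refine ⟨fun i hi => ?_, ?_⟩
    · have := h i
      simp only [S, mem_filter, mem_univ, true_and] at hi
      by_cases hσ : σ i <;> simp_all [swapAt]
    · rw [hitCount, sum_boole]
      refine Nat.cast_le.2 (card_le_card fun i hi => ?_)
      have := h i
      simp only [S, mem_filter, mem_univ, true_and] at hi ⊢
      by_cases hσ : σ i <;> simp_all [swapAt]
  have hw : ∀ σ : Fin n → Bool, 0 ≤ sampleWeight (fun _ => (1 / 2 : ℝ)) σ :=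
    sampleWeight_nonneg fun _ => by norm_num
  by_cases hk : k ≤ #S
  · calc _ ≤ ∑ σ : Fin n → Bool, sampleWeight (fun _ => (1 / 2 : ℝ)) σ *
            ∏ i ∈ S, (if σ i = r (z.1 i) then 1 else 0) := by
          refine sum_le_sum fun σ _ => mul_le_mul_of_nonneg_left ?_ (hw σ)
          split_ifs with h
          · exact (prod_eq_one fun i hi => if_pos ((hforced σ h.1).1 i hi)).ge
          · exact prod_nonneg fun _ _ => by positivity
      _ = (1 / 2) ^ #S := sum_coins_mul_prod_ite_eq S _
      _ ≤ (1 / 2) ^ k := pow_le_pow_of_le_one (by norm_num) (by norm_num) hk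
  · refine le_of_eq_of_le (sum_eq_zero fun σ _ => ?_) (by positivity)
    rw [if_neg, mul_zero]
    rintro ⟨h0, hhit⟩
    exact hk (Nat.cast_le.1 (hhit.trans (hforced σ h0).2))

open Classical in
lemma sum_sampleWeight_mul_ite_bad_le_two_mul_ghost [Fintype X] {p : X → ℝ} (hp0 : ∀ x, 0 ≤ p x)
    (hp1 : ∑ x, p x = 1) (G : Set (X → Bool)) {ε : ℝ} (hε : 8 ≤ n * ε) {k : ℕ}
    (hk : (k : ℝ) ≤ n * ε / 2) :
    ∑ s : Fin n → X, sampleWeight p s *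
        (if ∃ g ∈ G, (∀ i, g (s i) = false) ∧ ε < mass p g then 1 else 0) ≤
      2 * ∑ z : (Fin n → X) × (Fin n → X), sampleWeight p z.1 * sampleWeight p z.2 *
        (if ∃ g ∈ G, (∀ i, g (z.1 i) = false) ∧ (k : ℝ) ≤ hitCount g z.2 then 1 else 0) := by
  rw [Fintype.sum_prod_type, mul_sum]
  refine sum_le_sum fun s _ => ?_
  have hw := sampleWeight_nonneg (n := n) hp0
  split_ifs with hbad
  · obtain ⟨g, hg, hzero, hmass⟩ := hbad
    have hn : (0 : ℝ) ≤ n := n.cast_nonneg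
    have hhalf := one_half_le_sum_sampleWeight_mul_ite_le_hitCount (n := n) hp0 hp1 g
      (by nlinarith)
    calc sampleWeight p s * 1
        ≤ 2 * (sampleWeight p s * ∑ s' : Fin n → X, sampleWeight p s' *
            (if n * mass p g / 2 ≤ hitCount g s' then 1 else 0)) := by nlinarith [hw s]
      _ ≤ _ := by
        refine mul_le_mul_of_nonneg_left ?_ (by norm_num)
        rw [mul_sum]
        refine sum_le_sum fun s' _ => ?_
        rw [← mul_assoc]
        exact mul_le_mul_of_nonneg_left (ite_one_zero_mono fun h => ⟨g, hg, hzero, by nlinarith⟩)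
          (mul_nonneg (hw s) (hw s'))
  · rw [mul_zero]
    exact mul_nonneg (by norm_num) (sum_nonneg fun s' _ =>
      mul_nonneg (mul_nonneg (hw s) (hw s')) (by positivity))

lemma swapAt_agree {r g : X → Bool} {z : (Fin n → X) × (Fin n → X)}
    (h : ∀ i, r (z.1 i) = g (z.1 i) ∧ r (z.2 i) = g (z.2 i)) (σ : Fin n → Bool) (i : Fin n) :
    r ((swapAt σ z).1 i) = g ((swapAt σ z).1 i) ∧ r ((swapAt σ z).2 i) = g ((swapAt σ z).2 i) := by
  by_cases hσ : σ i <;> simp [swapAt, hσ, h i]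

open Classical in
lemma sum_coins_mul_ite_exists_swapAt_le [Fintype X] (G : Set (X → Bool)) (k : ℕ)
    {z : (Fin n → X) × (Fin n → X)} {Φ : ℕ} (hΦ : ∃ R : Finset (X → Bool), #R ≤ Φ ∧
      ∀ g ∈ G, ∃ r ∈ R, ∀ i, r (z.1 i) = g (z.1 i) ∧ r (z.2 i) = g (z.2 i)) :
    ∑ σ : Fin n → Bool, sampleWeight (fun _ => (1 / 2 : ℝ)) σ *
      (if ∃ g ∈ G, (∀ i, g ((swapAt σ z).1 i) = false) ∧
        (k : ℝ) ≤ hitCount g (swapAt σ z).2 then 1 else 0) ≤ Φ * (1 / 2) ^ k := by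
  obtain ⟨R, hR, hcover⟩ := hΦ
  have hcoin : ∀ σ : Fin n → Bool, 0 ≤ sampleWeight (fun _ => (1 / 2 : ℝ)) σ :=
    sampleWeight_nonneg fun _ => by norm_num
  calc _ ≤ ∑ σ : Fin n → Bool, sampleWeight (fun _ => (1 / 2 : ℝ)) σ * ∑ r ∈ R,
        (if (∀ i, r ((swapAt σ z).1 i) = false) ∧ (k : ℝ) ≤ hitCount r (swapAt σ z).2
          then 1 else 0) := by
        refine sum_le_sum fun σ _ => mul_le_mul_of_nonneg_left ?_ (hcoin σ)
        split_ifs with hbad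
        · obtain ⟨g, hg, hzero, hhit⟩ := hbad
          obtain ⟨r, hr, hrg⟩ := hcover g hg
          have hagree := swapAt_agree hrg σ
          have hhit' : hitCount r (swapAt σ z).2 = hitCount g (swapAt σ z).2 := by
            simp only [hitCount, fun i => (hagree i).2]
          refine le_of_eq_of_le ?_ (single_le_sum (fun r' _ => by positivity) hr)
          rw [if_pos ⟨fun i => (hagree i).1.trans (hzero i), hhit'.symm ▸ hhit⟩]
        · exact sum_nonneg fun _ _ => by positivity
    _ = ∑ r ∈ R, ∑ σ : Fin n → Bool, sampleWeight (fun _ => (1 / 2 : ℝ)) σ *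
        (if (∀ i, r ((swapAt σ z).1 i) = false) ∧ (k : ℝ) ≤ hitCount r (swapAt σ z).2
          then 1 else 0) := by
        simp_rw [mul_sum]
        exact sum_comm
    _ ≤ ∑ _r ∈ R, (1 / 2 : ℝ) ^ k := sum_le_sum fun r _ => sum_coins_mul_ite_swapAt_le r z k
    _ ≤ Φ * (1 / 2) ^ k := by
        rw [sum_const, nsmul_eq_mul]
        gcongr

open Classical in
lemma sum_sampleWeight_mul_sampleWeight_mul_ite_ghost_le [Fintype X] {p : X → ℝ}
    (hp0 : ∀ x, 0 ≤ p x) (hp1 : ∑ x, p x = 1) (G : Set (X → Bool)) (k : ℕ) {Φ : ℕ}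
    (hΦ : ∀ z : (Fin n → X) × (Fin n → X), ∃ R : Finset (X → Bool), #R ≤ Φ ∧
      ∀ g ∈ G, ∃ r ∈ R, ∀ i, r (z.1 i) = g (z.1 i) ∧ r (z.2 i) = g (z.2 i)) :
    ∑ z : (Fin n → X) × (Fin n → X), sampleWeight p z.1 * sampleWeight p z.2 *
        (if ∃ g ∈ G, (∀ i, g (z.1 i) = false) ∧ (k : ℝ) ≤ hitCount g z.2 then 1 else 0) ≤
      Φ * (1 / 2) ^ k := by
  have hw := sampleWeight_nonneg (n := n) hp0
  rw [sum_sampleWeight_mul_sampleWeight_mul_eq_sum_coins]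
  calc _ ≤ ∑ z : (Fin n → X) × (Fin n → X), sampleWeight p z.1 * sampleWeight p z.2 *
        (Φ * (1 / 2) ^ k) :=
        sum_le_sum fun z _ => mul_le_mul_of_nonneg_left
          (sum_coins_mul_ite_exists_swapAt_le G k (hΦ z)) (mul_nonneg (hw _) (hw _))
    _ = Φ * (1 / 2) ^ k := by rw [← sum_mul, sum_sampleWeight_mul_sampleWeight hp1, one_mul]

open Classical in
theorem sum_sampleWeight_mul_ite_bad_le [Fintype X] {p : X → ℝ} (hp0 : ∀ x, 0 ≤ p x)
    (hp1 : ∑ x, p x = 1) (G : Set (X → Bool)) {ε : ℝ} (hε : 8 ≤ n * ε) {k : ℕ}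
    (hk : (k : ℝ) ≤ n * ε / 2) {Φ : ℕ}
    (hΦ : ∀ z : (Fin n → X) × (Fin n → X), ∃ R : Finset (X → Bool), #R ≤ Φ ∧
      ∀ g ∈ G, ∃ r ∈ R, ∀ i, r (z.1 i) = g (z.1 i) ∧ r (z.2 i) = g (z.2 i)) :
    ∑ s : Fin n → X, sampleWeight p s *
        (if ∃ g ∈ G, (∀ i, g (s i) = false) ∧ ε < mass p g then 1 else 0) ≤
      2 * Φ * (1 / 2) ^ k := by
  have hghost := sum_sampleWeight_mul_sampleWeight_mul_ite_ghost_le hp0 hp1 G k hΦ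
  linarith [sum_sampleWeight_mul_ite_bad_le_two_mul_ghost hp0 hp1 G hε hk]

end Symmetrization

section Growth

variable {α J : Type*} [Fintype J]

lemma sum_choose_le_add_one_pow (m d : ℕ) : ∑ k ∈ Iic d, m.choose k ≤ (m + 1) ^ d := by
  rw [← Nat.range_succ_eq_Iic, add_pow]
  refine sum_le_sum fun k hk => ?_
  rw [one_pow, mul_one]
  exact (Nat.choose_le_pow m k).trans
    (Nat.le_mul_of_pos_right _ (Nat.choose_pos (Nat.lt_succ_iff.1 (mem_range.1 hk))))

/-- Traces are encoded as subsets of `J` so that Mathlib's `Finset.vcDim` applies. -/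
noncomputable def traces (F : Set (α → Bool)) (w : J → α) : Finset (Finset J) :=
  open Classical in univ.filter fun u => ∃ f ∈ F, univ.filter (fun j => f (w j)) = u

lemma mem_traces {F : Set (α → Bool)} {w : J → α} {u : Finset J} :
    u ∈ traces F w ↔ ∃ f ∈ F, univ.filter (fun j => f (w j)) = u := by
  classical
  simp [traces]

lemma shatters_of_traces_shatters [DecidableEq J] {F : Set (α → Bool)} {w : J → α}
    {s : Finset J} (hs : (traces F w).Shatters s) :
    Shatters F fun i : Fin #s => w (s.equivFin.symm i) := by
  intro v
  obtain ⟨u, hu, hsu⟩ := hs (s.filter_subset fun j => ∃ h : j ∈ s, v (s.equivFin ⟨j, h⟩))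
  obtain ⟨f, hf, rfl⟩ := mem_traces.1 hu
  refine ⟨f, hf, fun i => ?_⟩
  have hi := congrArg (fun t => (s.equivFin.symm i : J) ∈ t) hsu
  simp only [mem_inter, mem_filter, mem_univ, true_and, coe_mem, exists_true_left,
    Subtype.coe_eta, Equiv.apply_symm_apply] at hi
  exact Bool.eq_iff_iff.2 (iff_of_eq hi)

lemma vcDim_traces_le [DecidableEq J] {F : Set (α → Bool)} {d : ℕ} (hF : VCdimLe F d) (w : J → α) :
    (traces F w).vcDim ≤ d :=
  Finset.sup_le fun s hs => by simpa using hF _ _ (shatters_of_traces_shatters (mem_shatterer.1 hs))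

/-- Sauer–Shelah lemma. -/
theorem exists_card_le_forall_agree {F : Set (α → Bool)} {d : ℕ} (hF : VCdimLe F d)
    (w : J → α) :
    ∃ R : Finset (α → Bool), #R ≤ (Fintype.card J + 1) ^ d ∧
      ∀ f ∈ F, ∃ r ∈ R, ∀ j, r (w j) = f (w j) := by
  classical
  choose! rep hrepF hrep using fun u (hu : u ∈ traces F w) => mem_traces.1 hu
  refine ⟨(traces F w).image rep, ?_, fun f hf => ?_⟩
  · calc #((traces F w).image rep) ≤ #(traces F w) := card_image_le
      _ ≤ #(traces F w).shatterer := card_le_card_shatterer _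
      _ ≤ ∑ k ∈ Iic (traces F w).vcDim, (Fintype.card J).choose k := card_shatterer_le_sum_vcDim
      _ ≤ ∑ k ∈ Iic d, (Fintype.card J).choose k :=
          sum_le_sum_of_subset (Iic_subset_Iic.2 (vcDim_traces_le hF w))
      _ ≤ (Fintype.card J + 1) ^ d := sum_choose_le_add_one_pow _ _
  · have hu : univ.filter (fun j => f (w j)) ∈ traces F w := mem_traces.2 ⟨f, hf, rfl⟩
    refine ⟨_, mem_image_of_mem rep hu, fun j => Bool.eq_iff_iff.2 ?_⟩
    simpa using congrArg (j ∈ ·) (hrep _ hu)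

end Growth

section Numerics

open Real

lemma add_mul_le_two_mul_mul {a b l : ℝ} (hl : 0 ≤ l) (ha : l ≤ a) (hb : l ≤ b) :
    (a + b) * l ≤ 2 * (a * b) := by
  nlinarith [mul_le_mul_of_nonneg_left hb (hl.trans ha), mul_le_mul_of_nonneg_left ha (hl.trans hb)]

lemma log_two_sq_le {T d n : ℕ} (hT : 2 ≤ T) (hd : 1 ≤ d) (hn : 2 ≤ n) :
    log 2 ^ 2 ≤ d * log T * log n := by
  have hlT : log 2 ≤ log T := log_le_log (by norm_num) (by exact_mod_cast hT)
  have hln : log 2 ≤ log n := log_le_log (by norm_num) (by exact_mod_cast hn)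
  have h : log 2 * log 2 ≤ log T * log n :=
    mul_le_mul hlT hln (by positivity) ((log_nonneg one_le_two).trans hlT)
  have hd' : (1 : ℝ) ≤ d := by exact_mod_cast hd
  nlinarith

lemma two_mul_pow_mul_half_pow_le {T d n : ℕ} {δ : ℝ} (hT : 2 ≤ T) (hd : 1 ≤ d) (hn : 2 ≤ n)
    (hδ0 : 0 < δ) (hδ1 : δ < 1) {k : ℕ} (hk : 16 * (d * log T * log n + log (1 / δ)) ≤ k) :
    2 * ((((n + n) * T + 1) ^ d : ℕ) : ℝ) * (1 / 2) ^ k ≤ δ := by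
  set l := log 2
  set A := (d : ℝ) * log T * log n
  set L := log (1 / δ)
  have hl : 0.6931471803 < l := log_two_gt_d9
  have hlT : l ≤ log T := log_le_log (by norm_num) (by exact_mod_cast hT)
  have hln : l ≤ log n := log_le_log (by norm_num) (by exact_mod_cast hn)
  have hL : 0 < L := log_pos (one_lt_one_div hδ0 hδ1)
  set m : ℝ := (n + n) * T + 1
  have hm : log m ≤ 2 * (log n + log T) := by
    have hnT : (2 : ℝ) * 2 ≤ n * T :=
      mul_le_mul (by exact_mod_cast hn) (by exact_mod_cast hT) zero_le_two (by positivity)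
    calc log m ≤ log ((n * T) ^ 2) := log_le_log (by positivity) (by nlinarith)
      _ = 2 * (log n + log T) := by
        rw [log_pow, log_mul (by positivity) (by positivity)]
        push_cast
        ring
  have hA : l ^ 2 ≤ A := log_two_sq_le hT hd hn
  have hdm : l * (d * log m) ≤ 4 * A := by
    have := add_mul_le_two_mul_mul (by linarith) hln hlT
    have h1 : l * log m ≤ 4 * (log T * log n) := by nlinarith
    calc l * (d * log m) = d * (l * log m) := by ring
      _ ≤ d * (4 * (log T * log n)) := by gcongr
      _ = 4 * A := by ring
  have hkey : l + d * log m + L ≤ k * l := by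
    have hl2 : 5 / 16 ≤ l ^ 2 := by nlinarith
    have h1 : l * (l + d * log m) ≤ l * (16 * l * A) := by
      nlinarith [mul_le_mul_of_nonneg_right hl2 ((sq_nonneg l).trans hA)]
    have h2 := le_of_mul_le_mul_left h1 (by linarith)
    nlinarith
  have hlog : log (2 * m ^ d * (1 / 2) ^ k) ≤ log δ := by
    have hhalf : log (1 / 2) = -l := by rw [one_div, log_inv]
    have hδ : log δ = -L := by simp only [L, one_div, log_inv, neg_neg]
    rw [log_mul (by positivity) (by positivity), log_mul (by positivity) (by positivity), log_pow,
      log_pow, hhalf, hδ]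
    linarith
  push_cast
  exact (log_le_log_iff (by positivity) hδ0).1 hlog

/-- The constant `64` of the main theorem comes from here: with `n ε = 64 (A + L)`,
`A = d log T log n` and `L = log (1 / δ)`, the ghost-sample bound `2 (2nT + 1)^d 2^(-k)` for
`k = ⌈n ε / 4⌉` is at most `δ`. -/
lemma sft_numerics {T d n : ℕ} {δ ε : ℝ} (hT : 2 ≤ T) (hd : 1 ≤ d) (hn : 2 ≤ n) (hδ0 : 0 < δ)
    (hδ1 : δ < 1) (hε : n * ε = 64 * (d * log T * log n + log (1 / δ))) :
    8 ≤ n * ε ∧ (⌈n * ε / 4⌉₊ : ℝ) ≤ n * ε / 2 ∧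
      2 * ((((n + n) * T + 1) ^ d : ℕ) : ℝ) * (1 / 2) ^ ⌈n * ε / 4⌉₊ ≤ δ := by
  have hl : 0.6931471803 < log 2 := log_two_gt_d9
  have hA := log_two_sq_le hT hd hn
  have hL : 0 < log (1 / δ) := log_pos (one_lt_one_div hδ0 hδ1)
  have h8 : 8 ≤ n * ε := by nlinarith
  refine ⟨h8, ?_, two_mul_pow_mul_half_pow_le hT hd hn hδ0 hδ1 ?_⟩
  · linarith [Nat.ceil_lt_add_one (by linarith : 0 ≤ n * ε / 4)]
  · linarith [Nat.le_ceil (n * ε / 4)]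

end Numerics

section SupervisedFineTuning

variable {X : Type*}

/-- The next-token loss of `f` on the example `(x, fstar^AR(x))`, with teacher forcing. -/
def ntpLoss (fstar : List Bool → Bool) (T : ℕ) (f : List Bool → Bool) (x : List Bool) : ℕ :=
  ∑ t ∈ range T,
    if f (x ++ (arList fstar x T).take t) ≠ (arList fstar x T).getD t false then 1 else 0

lemma ntpLoss_eq_zero_iff (fstar f : List Bool → Bool) (T : ℕ) (x : List Bool) :
    ntpLoss fstar T f x = 0 ↔ arList f x T = arList fstar x T := by
  rw [arList_eq_iff, ntpLoss, sum_eq_zero_iff]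
  refine forall_congr' fun t => ?_
  rw [mem_range]
  refine imp_congr_right fun ht => ?_
  rw [arList_take _ _ ht.le, arList_getD _ _ ht]
  simp

def arMistake (fstar : List Bool → Bool) (T : ℕ) (ι : X → List Bool) (f : List Bool → Bool)
    (x : X) : Bool :=
  decide (arList f (ι x) T ≠ arList fstar (ι x) T)

lemma arMistake_eq_false_of_sum_ntpLoss_le {fstar f : List Bool → Bool} {T : ℕ}
    {ι : X → List Bool} {n : ℕ} {s : Fin n → X}
    (h : ∑ i, ntpLoss fstar T f (ι (s i)) ≤ ∑ i, ntpLoss fstar T fstar (ι (s i))) (i : Fin n) :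
    arMistake fstar T ι f (s i) = false := by
  have hstar : ∀ x, ntpLoss fstar T fstar x = 0 := fun x => (ntpLoss_eq_zero_iff _ _ _ _).2 rfl
  simp only [hstar, sum_const_zero, nonpos_iff_eq_zero, sum_eq_zero_iff, mem_univ,
    true_implies] at h
  simpa [arMistake] using (ntpLoss_eq_zero_iff _ _ _ _).1 (h i)

/-- The autoregressive mistake of `f` on a prompt only depends on the next-token predictions of
`f` along the `T` prefixes of the target trajectory; so Sauer–Shelah on the `2nT` prefixes of a
double sample bounds the behaviours of the mistake class. -/
lemma exists_card_le_forall_arMistake_agree {F : Set (List Bool → Bool)} {d : ℕ}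
    (hF : VCdimLe F d) (fstar : List Bool → Bool) (T : ℕ) (ι : X → List Bool) {n : ℕ}
    (z : (Fin n → X) × (Fin n → X)) :
    ∃ R : Finset (X → Bool), #R ≤ ((n + n) * T + 1) ^ d ∧
      ∀ g ∈ arMistake fstar T ι '' F,
        ∃ r ∈ R, ∀ i, r (z.1 i) = g (z.1 i) ∧ r (z.2 i) = g (z.2 i) := by
  classical
  set y := Sum.elim z.1 z.2
  obtain ⟨R, hR, hcover⟩ := exists_card_le_forall_agree hF
    fun j : (Fin n ⊕ Fin n) × Fin T => ι (y j.1) ++ arList fstar (ι (y j.1)) j.2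
  refine ⟨R.image (arMistake fstar T ι), by simpa using card_image_le.trans hR, ?_⟩
  rintro _ ⟨f, hf, rfl⟩
  obtain ⟨r, hr, hrf⟩ := hcover f hf
  have hagree : ∀ j, arMistake fstar T ι r (y j) = arMistake fstar T ι f (y j) := fun j => by
    have hiff : arList r (ι (y j)) T = arList fstar (ι (y j)) T ↔
        arList f (ι (y j)) T = arList fstar (ι (y j)) T := by
      simp only [arList_eq_iff]
      exact forall₂_congr fun t ht => by rw [hrf (j, ⟨t, ht⟩)]
    exact decide_eq_decide.2 (not_congr hiff)
  exact ⟨_, mem_image_of_mem _ hr, fun i => ⟨hagree (.inl i), hagree (.inr i)⟩⟩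

lemma one_sub_mass_arMistake_le [Fintype X] {p : X → ℝ} (hp0 : ∀ x, 0 ≤ p x)
    (hp1 : ∑ x, p x = 1) {fstar : List Bool → Bool} {T : ℕ} {rstar : List Bool → List Bool → ℝ}
    (hr0 : ∀ x y, 0 ≤ rstar x y)
    (hr : ∀ x y, 1 - rstar x y ≤ if arList fstar x T ≠ y then (1 : ℝ) else 0)
    (ι : X → List Bool) (f : List Bool → Bool) :
    1 - mass p (arMistake fstar T ι f) ≤ ∑ x, p x * rstar (ι x) (arList f (ι x) T) := by
  rw [mass, ← hp1, ← sum_sub_distrib]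
  refine sum_le_sum fun x _ => ?_
  have h0 := hr0 (ι x) (arList f (ι x) T)
  have h1 := hr (ι x) (arList f (ι x) T)
  rw [← mul_one_sub]
  refine mul_le_mul_of_nonneg_left ?_ (hp0 x)
  by_cases h : arList f (ι x) T = arList fstar (ι x) T <;> simp_all [arMistake, eq_comm]

end SupervisedFineTuning

open Classical in
/-- realizable SFT guarantee. There is a universal constant `c` such
that for any class `F` of next-token predictors with `VC(F) ≤ d`, target `f* ∈ F`,
reward with `1 − r_{f*}(x,y) ≤ 1{f*^AR(x) ≠ y}`, finitely supported prompt
distribution, and next-token ERM `f̂`: with probability at least `1−δ` over `n`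
i.i.d. samples `(xᵢ, f*^AR(xᵢ))`, the SFT reward satisfies
`E_{P_x} r_{f*}(x, f̂^AR(x)) ≥ 1 − c·(d·log T·log n + log(1/δ))/n`. -/
theorem realizable_sft_bound :
    ∃ c : ℝ, 0 < c ∧
    ∀ (T d : ℕ), 2 ≤ T → 1 ≤ d →
    ∀ (F : Set (List Bool → Bool)) (fstar : List Bool → Bool), fstar ∈ F →
      VCdimLe F d →
    ∀ (X : Type) (_ : Fintype X) (_ : Nonempty X) (ι : X → List Bool)
      (Px : X → ℝ), (∀ x, 0 ≤ Px x) → (∑ x, Px x) = 1 →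
    ∀ (rstar : List Bool → List Bool → ℝ),
      (∀ x y, 0 ≤ rstar x y ∧ rstar x y ≤ 1) →
      (∀ x y, 1 - rstar x y ≤ if arList fstar x T ≠ y then (1 : ℝ) else 0) →
    ∀ (n : ℕ) (δ : ℝ), 2 ≤ n → 0 < δ → δ < 1 →
    ∀ (erm : (Fin n → X) → (List Bool → Bool)),
      (∀ s, erm s ∈ F ∧ ∀ g ∈ F,
        (∑ i, ∑ t ∈ Finset.range T,
          if erm s (ι (s i) ++ (arList fstar (ι (s i)) T).take t) ≠
             (arList fstar (ι (s i)) T).getD t false then (1 : ℕ) else 0) ≤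
        (∑ i, ∑ t ∈ Finset.range T,
          if g (ι (s i) ++ (arList fstar (ι (s i)) T).take t) ≠
             (arList fstar (ι (s i)) T).getD t false then (1 : ℕ) else 0)) →
    (∑ s : Fin n → X, (∏ i, Px (s i)) *
      (if (∑ x, Px x * rstar (ι x) (arList (erm s) (ι x) T)) ≥
          1 - c * ((d : ℝ) * Real.log T * Real.log n + Real.log (1 / δ)) / n
       then (1 : ℝ) else 0)) ≥ 1 - δ := by
  classical
  refine ⟨64, by norm_num, ?_⟩
  intro T d hT hd F fstar hfstar hVC X _ _ ι Px hPx0 hPx1 rstar hr01 hr n δ hn hδ0 hδ1 erm herm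
  set ε : ℝ := 64 * ((d : ℝ) * Real.log T * Real.log n + Real.log (1 / δ)) / n
  obtain ⟨h8, hk, hδ⟩ := sft_numerics (ε := ε) hT hd hn hδ0 hδ1 (by
    simp only [ε]
    field_simp)
  have hbad := sum_sampleWeight_mul_ite_bad_le hPx0 hPx1 (arMistake fstar T ι '' F) h8 hk
    (exists_card_le_forall_arMistake_agree hVC fstar T ι)
  have hgood : ∀ s : Fin n → X,
      ¬ (∃ g ∈ arMistake fstar T ι '' F, (∀ i, g (s i) = false) ∧ ε < mass Px g) →
        ∑ x, Px x * rstar (ι x) (arList (erm s) (ι x) T) ≥ 1 - ε := fun s hs => by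
    have hcons := arMistake_eq_false_of_sum_ntpLoss_le ((herm s).2 fstar hfstar)
    have hmass : mass Px (arMistake fstar T ι (erm s)) ≤ ε :=
      not_lt.1 fun h => hs ⟨_, ⟨erm s, (herm s).1, rfl⟩, hcons, h⟩
    linarith [one_sub_mass_arMistake_le hPx0 hPx1 (fun x y => (hr01 x y).1) hr ι (erm s)]
  refine le_trans ?_ (sum_le_sum fun s _ => mul_le_mul_of_nonneg_left
    (ite_one_zero_mono (hgood s)) (sampleWeight_nonneg hPx0 s))
  rw [sum_mul_ite_not]
  change _ ≤ ∑ s, sampleWeight Px s - ∑ s, sampleWeight Px s * _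
  rw [sum_sampleWeight hPx1]
  linarith
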